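/- Let J be a degenerate (complex) bihamiltonian structure on a manifold M, J₀ ⊂ J the subset of Poisson bivectors of maximal rank R₀ < dim M, and F₀ = Σ_{c ∈ J₀} Z_c(M) the span of Casimir functions of maximal-rank members. Then F₀ is an involutive family with respect to every c_λ ∈ J: for all f, g ∈ F₀ and all c_λ ∈ J, {f, g}_{c_λ} = 0. -/

import Mathlib

open Module

abbrev En (N : ℕ) := Fin N → ℝ

/-- The Schouten bracket of two bivector fields on ℝ^N, evaluated at x on a
triple of constant covectors. -/
noncomputable def schoutenE (N : ℕ)
    (B C : En N → (Module.Dual ℝ (En N) →ₗ[ℝ] En N))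
    (x : En N) (f g h : Module.Dual ℝ (En N)) : ℝ :=
  (1/2) * ((fderiv ℝ (fun y => h (C y g)) x (B x f)
              + fderiv ℝ (fun y => h (B y g)) x (C x f))
          + (fderiv ℝ (fun y => f (C y h)) x (B x g)
              + fderiv ℝ (fun y => f (B y h)) x (C x g))
          + (fderiv ℝ (fun y => g (C y f)) x (B x h)
              + fderiv ℝ (fun y => g (B y f)) x (C x h)))

section Helpers

open Matrix

variable {N : ℕ}

lemma En.dual_expand (L : Module.Dual ℝ (En N)) :
    L = ∑ i : Fin N, L (Pi.single i 1) • (LinearMap.proj i : En N →ₗ[ℝ] ℝ) := by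
  apply (Pi.basisFun ℝ (Fin N)).ext
  intro j
  simp [Pi.single_apply]

lemma En.vec_expand (v : En N) : v = ∑ k : Fin N, v k • (Pi.single k 1 : En N) := by
  funext j
  simp [Finset.sum_apply, Pi.single_apply]

lemma gram_eq (m : ℕ) (w : Fin m → En N) (c : Fin m → ℝ) (i : Fin m) :
    ((Matrix.of fun i j => w i ⬝ᵥ w j).mulVec c) i = w i ⬝ᵥ (∑ j, c j • w j) := by
  simp only [Matrix.mulVec, dotProduct, Matrix.of_apply, Finset.sum_apply,
    Pi.smul_apply, smul_eq_mul, Finset.mul_sum, Finset.sum_mul]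
  rw [Finset.sum_comm]
  exact Finset.sum_congr rfl fun k _ => Finset.sum_congr rfl fun j _ => by ring

lemma gram_det_eq_zero_iff (m : ℕ) (w : Fin m → En N) :
    (Matrix.of fun i j => w i ⬝ᵥ w j).det = 0 ↔
      ∃ c : Fin m → ℝ, c ≠ 0 ∧ ∑ i, c i • w i = 0 := by
  rw [← Matrix.exists_mulVec_eq_zero_iff]
  constructor
  · rintro ⟨c, hc, hmv⟩
    refine ⟨c, hc, ?_⟩
    have h0 : c ⬝ᵥ (Matrix.of fun i j => w i ⬝ᵥ w j).mulVec c = 0 := by rw [hmv]; simp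
    have h1 : (∑ i, c i • w i) ⬝ᵥ (∑ j, c j • w j) = 0 := by
      rw [← h0]
      simp only [dotProduct, Matrix.mulVec, Matrix.of_apply, Finset.sum_apply,
        Pi.smul_apply, smul_eq_mul, Finset.mul_sum, Finset.sum_mul]
      rw [Finset.sum_comm]
      refine Finset.sum_congr rfl fun i _ => ?_
      rw [Finset.sum_comm]
      refine Finset.sum_congr rfl fun k _ => Finset.sum_congr rfl fun j _ => by ring
    exact dotProduct_self_eq_zero.mp h1
  · rintro ⟨c, hc, hsum⟩
    refine ⟨c, hc, ?_⟩
    funext i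
    rw [gram_eq, hsum]
    simp



lemma exists_dep_of_low_rank {m : ℕ} (W : Submodule ℝ (En N)) (r : ℕ)
    (hW : finrank ℝ W ≤ r) (hrm : r < m) (w : Fin m → En N) (hw : ∀ i, w i ∈ W) :
    ∃ c : Fin m → ℝ, c ≠ 0 ∧ ∑ i, c i • w i = 0 := by
  by_contra hcon
  push_neg at hcon
  have hli : LinearIndependent ℝ (fun i => (⟨w i, hw i⟩ : W)) := by
    rw [Fintype.linearIndependent_iff]
    intro g hg
    by_contra hgi
    push_neg at hgi
    obtain ⟨i, hi⟩ := hgi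
    have hgne : g ≠ 0 := fun h => hi (by rw [h]; rfl)
    refine hcon g hgne ?_ |>.elim
    have := congrArg (Submodule.subtype W) hg
    simpa using this
  have := hli.fintype_card_le_finrank
  simp only [Fintype.card_fin] at this
  omega

lemma key_la (N : ℕ) (A B : Module.Dual ℝ (En N) →ₗ[ℝ] En N)
    (hskew : ∀ f g : Module.Dual ℝ (En N), f (A g) = - g (A f))
    (r : ℕ) (hr : finrank ℝ (LinearMap.range A) = r)
    (hle : ∀ s : ℝ, finrank ℝ (LinearMap.range (A + s • B)) ≤ r)
    (f g : Module.Dual ℝ (En N)) (hf : A f = 0) (hg : A g = 0) :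
    g (B f) = 0 := by
  have hBf : B f ∈ LinearMap.range A := by
    subst hr
    set r := finrank ℝ (LinearMap.range A) with hrdef
    let b := Module.finBasis ℝ (LinearMap.range A)
    have hbmem : ∀ i : Fin r, ((b i : En N)) ∈ LinearMap.range A := fun i => (b i).2
    choose u hu using hbmem
    set w : ℝ → Fin (r+1) → En N :=
      fun s => Fin.snoc (fun i => (A + s • B) (u i)) (B f) with hwdef
    have hw_mem : ∀ s : ℝ, s ≠ 0 → ∀ i, w s i ∈ LinearMap.range (A + s • B) := by
      intro s hs i
      refine Fin.lastCases ?_ ?_ i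
      · rw [hwdef]
        simp only [Fin.snoc_last]
        refine ⟨s⁻¹ • f, ?_⟩
        simp [_root_.map_smul, hf, smul_smul, inv_mul_cancel₀ hs]
      · intro i
        rw [hwdef]
        simp only [Fin.snoc_castSucc]
        exact ⟨u i, rfl⟩
    have hdep : ∀ s : ℝ, s ≠ 0 → ∃ c : Fin (r+1) → ℝ, c ≠ 0 ∧ ∑ i, c i • w s i = 0 :=
      fun s hs => exists_dep_of_low_rank _ r (hle s) (Nat.lt_succ_self r) _ (hw_mem s hs)
    have hwcont : ∀ i, Continuous fun s : ℝ => w s i := by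
      intro i
      refine Fin.lastCases ?_ ?_ i
      · simp only [hwdef, Fin.snoc_last]
        exact continuous_const
      · intro i
        simp only [hwdef, Fin.snoc_castSucc, LinearMap.add_apply, LinearMap.smul_apply]
        exact continuous_const.add (continuous_id.smul continuous_const)
    have hcont : Continuous fun s : ℝ => (Matrix.of fun i j => w s i ⬝ᵥ w s j).det := by
      refine Continuous.matrix_det ?_
      refine continuous_matrix fun i j => ?_
      exact (hwcont i).dotProduct (hwcont j)
    have hzero : ∀ s : ℝ, s ≠ 0 → (Matrix.of fun i j => w s i ⬝ᵥ w s j).det = 0 :=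
      fun s hs => (gram_det_eq_zero_iff _ _).mpr (hdep s hs)
    have h0 : (Matrix.of fun i j => w 0 i ⬝ᵥ w 0 j).det = 0 := by
      have hd : Dense ({(0:ℝ)}ᶜ : Set ℝ) := dense_compl_singleton 0
      have heq := Continuous.ext_on hd hcont continuous_const
        (fun s hs => hzero s (Set.mem_compl_singleton_iff.mp hs))
      exact congrFun heq 0
    obtain ⟨c, hc, hsum⟩ := (gram_det_eq_zero_iff _ _).mp h0
    have hw0 : ∀ i : Fin r, w 0 (Fin.castSucc i) = A (u i) := by
      intro i
      simp [hwdef]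
    have hw0l : w 0 (Fin.last r) = B f := by simp [hwdef]
    rw [Fin.sum_univ_castSucc] at hsum
    simp only [hw0, hw0l] at hsum
    have hli : LinearIndependent ℝ (fun i : Fin r => A (u i)) := by
      have he : (fun i : Fin r => A (u i)) = fun i => ((b i : En N)) := funext fun i => hu i
      rw [he]
      exact b.linearIndependent.map' (LinearMap.range A).subtype
        (Submodule.ker_subtype _)
    by_cases hcl : c (Fin.last r) = 0
    · exfalso
      rw [hcl, zero_smul, add_zero] at hsum
      have hall := Fintype.linearIndependent_iff.mp hli (fun i => c (Fin.castSucc i)) hsum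
      apply hc
      funext i
      refine Fin.lastCases hcl (fun i => hall i) i
    · have hBfeq : B f = A ((-(c (Fin.last r))⁻¹) • ∑ i : Fin r, c (Fin.castSucc i) • u i) := by
        have h1 : c (Fin.last r) • B f = - ∑ i : Fin r, c (Fin.castSucc i) • A (u i) :=
          eq_neg_of_add_eq_zero_left (by rw [add_comm] at hsum; exact hsum)
        have h2 : B f = (-(c (Fin.last r))⁻¹) • ∑ i : Fin r, c (Fin.castSucc i) • A (u i) := by
          rw [neg_smul, ← smul_neg, ← h1, smul_smul, inv_mul_cancel₀ hcl, one_smul]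
        rw [h2, _root_.map_smul, map_sum]
        simp only [_root_.map_smul]
      exact ⟨_, hBfeq.symm⟩
  obtain ⟨ζ, hζ⟩ := hBf
  rw [← hζ, hskew, hg]
  simp

end Helpers

section ContH
variable {N : ℕ}

lemma cont_bracket (C : En N → (Module.Dual ℝ (En N) →ₗ[ℝ] En N))
    (hC : ∀ L : Module.Dual ℝ (En N), Continuous fun x => C x L)
    (f g : En N → ℝ) (hf : ContDiff ℝ (⊤ : ℕ∞) f) (hg : ContDiff ℝ (⊤ : ℕ∞) g) :
    Continuous fun x => fderiv ℝ g x (C x (fderiv ℝ f x : En N →ₗ[ℝ] ℝ)) := by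
  have hdf : Continuous fun x => fderiv ℝ f x := hf.continuous_fderiv (by simp)
  have hdg : Continuous fun x => fderiv ℝ g x := hg.continuous_fderiv (by simp)
  have key : ∀ x, fderiv ℝ g x (C x (fderiv ℝ f x : En N →ₗ[ℝ] ℝ))
      = ∑ i : Fin N, ∑ k : Fin N, (fderiv ℝ f x (Pi.single i 1)) *
          ((C x (LinearMap.proj i)) k * (fderiv ℝ g x (Pi.single k 1))) := by
    intro x
    conv_lhs => rw [En.dual_expand (fderiv ℝ f x : En N →ₗ[ℝ] ℝ)]
    rw [map_sum, map_sum]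
    refine Finset.sum_congr rfl fun i _ => ?_
    rw [_root_.map_smul, _root_.map_smul, smul_eq_mul]
    have hinner : (fderiv ℝ g x) ((C x) (LinearMap.proj i))
        = ∑ k : Fin N, (C x (LinearMap.proj i)) k * (fderiv ℝ g x (Pi.single k 1)) := by
      conv_lhs => rw [En.vec_expand (C x (LinearMap.proj i))]
      rw [map_sum]
      refine Finset.sum_congr rfl fun k _ => ?_
      rw [_root_.map_smul, smul_eq_mul]
    rw [hinner, Finset.mul_sum]
    rfl
  rw [show (fun x => fderiv ℝ g x (C x (fderiv ℝ f x : En N →ₗ[ℝ] ℝ)))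
      = fun x => ∑ i : Fin N, ∑ k : Fin N, (fderiv ℝ f x (Pi.single i 1)) *
          ((C x (LinearMap.proj i)) k * (fderiv ℝ g x (Pi.single k 1))) from funext key]
  refine continuous_finset_sum _ fun i _ => continuous_finset_sum _ fun k _ => ?_
  exact (hdf.clm_apply continuous_const).mul
    (((continuous_apply k).comp (hC (LinearMap.proj i))).mul (hdg.clm_apply continuous_const))

lemma pair_decomp (lf1 lf2 lg1 lg2 : ℝ) (hlf : ¬(lf1 = 0 ∧ lf2 = 0))
    (hpar : ∀ t : ℝ, ¬(lg1 = t * lf1 ∧ lg2 = t * lf2)) (m1 m2 : ℝ) :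
    ∃ a b : ℝ, m1 = a * lf1 + b * lg1 ∧ m2 = a * lf2 + b * lg2 := by
  have hd : lf1 * lg2 - lf2 * lg1 ≠ 0 := by
    intro h0
    by_cases h1 : lf1 = 0
    · have h2 : lf2 ≠ 0 := fun h => hlf ⟨h1, h⟩
      have h3 : lf2 * lg1 = 0 := by rw [h1] at h0; linarith
      have hg1 : lg1 = 0 := (mul_eq_zero.mp h3).resolve_left h2
      exact hpar (lg2 / lf2) ⟨by rw [h1, mul_zero, hg1], by field_simp⟩
    · refine hpar (lg1 / lf1) ⟨by field_simp, ?_⟩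
      field_simp
      linear_combination h0
  exact ⟨(m1*lg2 - m2*lg1)/(lf1*lg2 - lf2*lg1), (lf1*m2 - lf2*m1)/(lf1*lg2 - lf2*lg1),
    by rw [div_mul_eq_mul_div, div_mul_eq_mul_div, ← add_div, eq_div_iff hd]; ring,
    by rw [div_mul_eq_mul_div, div_mul_eq_mul_div, ← add_div, eq_div_iff hd]; ring⟩

end ContH

/-- let J = {c_μ = μ₁c₁ + μ₂c₂} be a degenerate bihamiltonian
structure on M = ℝ^N (each member a Poisson bivector of maximal rank R μ on a
dense subset, R₀ = max_μ R μ < dim M), and let F₀ be the span of the global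
Casimir functions of the members of maximal rank R₀.  Then F₀ is involutive
with respect to every c_μ ∈ J: {f, g}_{c_μ} = 0 for all f, g ∈ F₀. -/
theorem stmt11 (N : ℕ)
    (c₁ c₂ : En N → (Module.Dual ℝ (En N) →ₗ[ℝ] En N))
    (hsm₁ : ∀ f : Module.Dual ℝ (En N), ContDiff ℝ (⊤ : ℕ∞) fun x => c₁ x f)
    (hsm₂ : ∀ f : Module.Dual ℝ (En N), ContDiff ℝ (⊤ : ℕ∞) fun x => c₂ x f)
    (hskew₁ : ∀ x (f g : Module.Dual ℝ (En N)), f (c₁ x g) = - g (c₁ x f))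
    (hskew₂ : ∀ x (f g : Module.Dual ℝ (En N)), f (c₂ x g) = - g (c₂ x f))
    (hindep : ∀ a b : ℝ,
      (∀ x (f : Module.Dual ℝ (En N)), a • c₁ x f + b • c₂ x f = 0) → a = 0 ∧ b = 0)
    (hPoisson : ∀ μ₁ μ₂ : ℝ, ∀ x (f g h : Module.Dual ℝ (En N)),
      schoutenE N (fun y => μ₁ • c₁ y + μ₂ • c₂ y)
        (fun y => μ₁ • c₁ y + μ₂ • c₂ y) x f g h = 0)
    (R : ℝ × ℝ → ℕ)
    (hRle : ∀ μ : ℝ × ℝ, ∀ x,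
      finrank ℝ (LinearMap.range (μ.1 • c₁ x + μ.2 • c₂ x)) ≤ R μ)
    (hRdense : ∀ μ : ℝ × ℝ, μ ≠ 0 →
      Dense {x | finrank ℝ (LinearMap.range (μ.1 • c₁ x + μ.2 • c₂ x)) = R μ})
    (R₀ : ℕ) (hR₀le : ∀ μ, R μ ≤ R₀)
    (hR₀ex : ∃ μ : ℝ × ℝ, μ ≠ 0 ∧ R μ = R₀)
    (hdeg : R₀ < N)
    (F₀ : Submodule ℝ (En N → ℝ))
    (hF₀ : F₀ = Submodule.span ℝ
      {f : En N → ℝ | ContDiff ℝ (⊤ : ℕ∞) f ∧ ∃ μ : ℝ × ℝ, μ ≠ 0 ∧ R μ = R₀ ∧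
        ∀ x, (μ.1 • c₁ x + μ.2 • c₂ x) (fderiv ℝ f x : En N →ₗ[ℝ] ℝ) = 0}) :
    ∀ f ∈ F₀, ∀ g ∈ F₀, ∀ μ : ℝ × ℝ, ∀ x,
      fderiv ℝ g x ((μ.1 • c₁ x + μ.2 • c₂ x) (fderiv ℝ f x : En N →ₗ[ℝ] ℝ)) = 0 := by
  subst hF₀
  have hskewμ : ∀ (lam : ℝ × ℝ) (y : En N) (a b : Module.Dual ℝ (En N)),
      a ((lam.1 • c₁ y + lam.2 • c₂ y) b) = - b ((lam.1 • c₁ y + lam.2 • c₂ y) a) := by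
    intro lam y a b
    simp only [LinearMap.add_apply, LinearMap.smul_apply, map_add, _root_.map_smul,
      smul_eq_mul]
    rw [hskew₁ y a b, hskew₂ y a b]
    ring
  set S : Set (En N → ℝ) := {f : En N → ℝ | ContDiff ℝ (⊤ : ℕ∞) f ∧ ∃ μ : ℝ × ℝ, μ ≠ 0 ∧ R μ = R₀ ∧
      ∀ x, (μ.1 • c₁ x + μ.2 • c₂ x) (fderiv ℝ f x : En N →ₗ[ℝ] ℝ) = 0} with hS
  have hsmooth : ∀ h ∈ Submodule.span ℝ S, ContDiff ℝ (⊤ : ℕ∞) h := by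
    intro h hh
    refine Submodule.span_induction (p := fun f _ => ContDiff ℝ (⊤ : ℕ∞) f) ?_ ?_ ?_ ?_ hh
    · exact fun f hf => hf.1
    · exact contDiff_const
    · exact fun a b _ _ ha hb => ha.add hb
    · exact fun t a _ ht => ht.const_smul t
  have core : ∀ f ∈ S, ∀ g ∈ S, ∀ (μ : ℝ × ℝ) (x : En N),
      fderiv ℝ g x ((μ.1 • c₁ x + μ.2 • c₂ x) (fderiv ℝ f x : En N →ₗ[ℝ] ℝ)) = 0 := by
    rintro f ⟨hfsm, pf, hpf0, hpfR, hpfC⟩ g ⟨hgsm, pg, hpg0, hpgR, hpgC⟩ μ x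
    by_cases hpar : ∃ t : ℝ, pg = t • pf
    · -- parallel case: use the rank/continuity argument
      obtain ⟨t, ht⟩ := hpar
      have ht0 : t ≠ 0 := by
        rintro rfl
        rw [zero_smul] at ht
        exact hpg0 ht
      have hpfC' : ∀ y, (pf.1 • c₁ y + pf.2 • c₂ y) (fderiv ℝ g y : En N →ₗ[ℝ] ℝ) = 0 := by
        intro y
        have h1 := hpgC y
        rw [ht] at h1
        have h2 : ((t • pf).1 • c₁ y + (t • pf).2 • c₂ y)
            = t • (pf.1 • c₁ y + pf.2 • c₂ y) := by
          have ht1 : (t • pf).1 = t * pf.1 := rfl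
          have ht2 : (t • pf).2 = t * pf.2 := rfl
          rw [ht1, ht2]
          module
        rw [h2] at h1
        simp only [LinearMap.smul_apply] at h1
        exact (smul_eq_zero.mp h1).resolve_left ht0
      have hCμ : ∀ L : Module.Dual ℝ (En N),
          Continuous fun y => (μ.1 • c₁ y + μ.2 • c₂ y) L := by
        intro L
        simp only [LinearMap.add_apply, LinearMap.smul_apply]
        exact (((hsm₁ L).continuous).const_smul μ.1).add
          (((hsm₂ L).continuous).const_smul μ.2)
      have hφ : Continuous fun y =>
          fderiv ℝ g y ((μ.1 • c₁ y + μ.2 • c₂ y) (fderiv ℝ f y : En N →ₗ[ℝ] ℝ)) :=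
        cont_bracket (fun y => μ.1 • c₁ y + μ.2 • c₂ y) hCμ f g hfsm hgsm
      have hEq : Set.EqOn
          (fun y => fderiv ℝ g y ((μ.1 • c₁ y + μ.2 • c₂ y) (fderiv ℝ f y : En N →ₗ[ℝ] ℝ)))
          (fun _ => 0)
          {y | finrank ℝ (LinearMap.range (pf.1 • c₁ y + pf.2 • c₂ y)) = R pf} := by
        intro y hy
        have hy' : finrank ℝ (LinearMap.range (pf.1 • c₁ y + pf.2 • c₂ y)) = R₀ := by
          rw [Set.mem_setOf_eq] at hy
          rw [hy, hpfR]
        have hle' : ∀ s : ℝ, finrank ℝ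
            (LinearMap.range ((pf.1 • c₁ y + pf.2 • c₂ y)
              + s • (μ.1 • c₁ y + μ.2 • c₂ y))) ≤ R₀ := by
          intro s
          have h3 : (pf.1 • c₁ y + pf.2 • c₂ y) + s • (μ.1 • c₁ y + μ.2 • c₂ y)
              = ((pf.1 + s * μ.1) • c₁ y + (pf.2 + s * μ.2) • c₂ y) := by
            module
          rw [h3]
          exact (hRle (pf.1 + s * μ.1, pf.2 + s * μ.2) y).trans (hR₀le _)
        have hkey := key_la N (pf.1 • c₁ y + pf.2 • c₂ y) (μ.1 • c₁ y + μ.2 • c₂ y)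
          (hskewμ pf y) R₀ hy' hle'
          (fderiv ℝ f y : En N →ₗ[ℝ] ℝ) (fderiv ℝ g y : En N →ₗ[ℝ] ℝ)
          (hpfC y) (hpfC' y)
        simpa using hkey
      have hfin := Continuous.ext_on (hRdense pf hpf0) hφ continuous_const hEq
      exact congrFun hfin x
    · -- independent case
      push_neg at hpar
      have hlf : ¬(pf.1 = 0 ∧ pf.2 = 0) := by
        rintro ⟨h1, h2⟩
        exact hpf0 (Prod.ext_iff.mpr ⟨h1, h2⟩)
      have hpar' : ∀ t : ℝ, ¬(pg.1 = t * pf.1 ∧ pg.2 = t * pf.2) := by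
        rintro t ⟨h1, h2⟩
        exact hpar t (Prod.ext_iff.mpr ⟨h1, h2⟩)
      obtain ⟨a, b, hμ1, hμ2⟩ := pair_decomp pf.1 pf.2 pg.1 pg.2 hlf hpar' μ.1 μ.2
      have hM : (μ.1 • c₁ x + μ.2 • c₂ x)
          = a • (pf.1 • c₁ x + pf.2 • c₂ x) + b • (pg.1 • c₁ x + pg.2 • c₂ x) := by
        rw [hμ1, hμ2]
        module
      rw [hM, LinearMap.add_apply, LinearMap.smul_apply, LinearMap.smul_apply,
        hpfC x, smul_zero, zero_add]
      have hsk := hskewμ pg x (fderiv ℝ g x : En N →ₗ[ℝ] ℝ) (fderiv ℝ f x : En N →ₗ[ℝ] ℝ)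
      rw [hpgC x] at hsk
      simp only [map_zero, neg_zero, ContinuousLinearMap.coe_coe] at hsk
      rw [_root_.map_smul, hsk, smul_zero]
  intro f hf g hg
  exact Submodule.span_induction₂
    (p := fun f g _ _ => ∀ (μ : ℝ × ℝ) (x : En N),
      fderiv ℝ g x ((μ.1 • c₁ x + μ.2 • c₂ x) (fderiv ℝ f x : En N →ₗ[ℝ] ℝ)) = 0)
    (fun a b ha hb => core a ha b hb)
    (by
      intro g _ μ x
      have h0 : fderiv ℝ (0 : En N → ℝ) x = 0 := fderiv_const_apply (0 : ℝ)
      rw [h0]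
      simp)
    (by
      intro f _ μ x
      have h0 : fderiv ℝ (0 : En N → ℝ) x = 0 := fderiv_const_apply (0 : ℝ)
      rw [h0]
      simp)
    (by
      intro f₁ f₂ g hf₁ hf₂ _ h1 h2 μ x
      have d1 : DifferentiableAt ℝ f₁ x := ((hsmooth _ hf₁).differentiable (by simp)).differentiableAt
      have d2 : DifferentiableAt ℝ f₂ x := ((hsmooth _ hf₂).differentiable (by simp)).differentiableAt
      have hadd : fderiv ℝ (f₁ + f₂) x = fderiv ℝ f₁ x + fderiv ℝ f₂ x := fderiv_add d1 d2
      rw [hadd]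
      simp only [ContinuousLinearMap.coe_add, map_add]
      rw [h1 μ x, h2 μ x, add_zero])
    (by
      intro f g₁ g₂ _ hg₁ hg₂ h1 h2 μ x
      have d1 : DifferentiableAt ℝ g₁ x := ((hsmooth _ hg₁).differentiable (by simp)).differentiableAt
      have d2 : DifferentiableAt ℝ g₂ x := ((hsmooth _ hg₂).differentiable (by simp)).differentiableAt
      have hadd : fderiv ℝ (g₁ + g₂) x = fderiv ℝ g₁ x + fderiv ℝ g₂ x := fderiv_add d1 d2
      rw [hadd, ContinuousLinearMap.add_apply, h1 μ x, h2 μ x, add_zero])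
    (by
      intro t f g hf _ h μ x
      have d1 : DifferentiableAt ℝ f x := ((hsmooth _ hf).differentiable (by simp)).differentiableAt
      have hsm : fderiv ℝ (t • f) x = t • fderiv ℝ f x := fderiv_const_smul d1 t
      rw [hsm]
      simp only [ContinuousLinearMap.coe_smul, _root_.map_smul]
      rw [h μ x, smul_zero])
    (by
      intro t f g _ hg h μ x
      have d1 : DifferentiableAt ℝ g x := ((hsmooth _ hg).differentiable (by simp)).differentiableAt
      have hsm : fderiv ℝ (t • g) x = t • fderiv ℝ g x := fderiv_const_smul d1 t
      rw [hsm, ContinuousLinearMap.smul_apply, h μ x, smul_zero])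
    hf hg
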